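/- Let F(t) = ((sin t)/t − 1)/t² for t > 0 and F(0) = −1/6. Then for all integers m ≥ 0 and N with 2N ≥ m, and all real t ≥ 0, | (1/m!) F⁽ᵐ⁾(t) − (1/m!) ∑_{⌈m/2⌉ ≤ k ≤ N} (−1)^{k+1} t^{2k−m} / ((2k−m)! (2k+1)(2k+2)(2k+3)) | ≤ (1/m!) e^t t^{2N+2−m} / (2N+2−m)!. -/

import Mathlib

open Real Finset

/-- `F(t) = ((sin t)/t - 1)/t²` for `t ≠ 0`, with `F(0) = -1/6`. -/
noncomputable def Ffun (t : ℝ) : ℝ :=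
  if t = 0 then -1 / 6 else (Real.sin t / t - 1) / t ^ 2

/-!
Differentiating the Taylor series `F(t) = ∑ₖ (-1)^(k+1) t^(2k)/(2k+3)!` termwise gives `F⁽ᵐ⁾`
as a series whose partial sums are the displayed ones. Writing `M = 2N+2-m`, the terms with
`k = N+1+i` are bounded by `t^(M+2i)/(M+2i)! ≤ t^M/M! · t^(2i)/(2i)!`, and
`∑ᵢ t^(2i)/(2i)! = cosh t ≤ eᵗ`.
-/

section

open Nat

theorem pow_add_div_factorial_le {x : ℝ} (hx : 0 ≤ x) (a b : ℕ) :
    x ^ (a + b) / (a + b)! ≤ x ^ a / a ! * (x ^ b / b !) := by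
  have hdvd : (a ! * b ! : ℝ) ≤ (a + b)! := by
    exact_mod_cast Nat.le_of_dvd (factorial_pos _) (factorial_mul_factorial_dvd_factorial_add a b)
  rw [_root_.div_mul_div_comm, ← pow_add]
  exact div_le_div_of_nonneg_left (by positivity) (by positivity) hdvd

theorem summable_pow_sub_div_factorial (m : ℕ) {R : ℝ} (hR : 0 ≤ R) :
    Summable fun k : ℕ => R ^ (2 * k - m) / (2 * k - m)! := by
  rw [← summable_nat_add_iff m]
  refine .of_nonneg_of_le (fun _ => by positivity) (fun k => ?_)
    ((Real.hasSum_cosh R).summable.mul_left (R ^ m / m !))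
  rw [show 2 * (k + m) - m = m + 2 * k by omega]
  exact pow_add_div_factorial_le hR m (2 * k)

theorem Real.cosh_le_exp {x : ℝ} (hx : 0 ≤ x) : cosh x ≤ exp x := by
  rw [Real.cosh_eq]
  linarith [exp_le_exp.mpr (by linarith : -x ≤ x)]

namespace Ffun

/-- The `m`-th derivative of the `k`-th Taylor term `(-1)^(k+1) t^(2k)/(2k+3)!` of `Ffun`; the
descending factorial vanishes when `2k < m`, which hides the truncated exponent `2k - m`. -/
noncomputable def seriesTerm (m k : ℕ) (t : ℝ) : ℝ :=
  (-1) ^ (k + 1) * (2 * k).descFactorial m * t ^ (2 * k - m) / (2 * k + 3)!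

theorem seriesTerm_eq_zero {m k : ℕ} (h : 2 * k < m) (t : ℝ) : seriesTerm m k t = 0 := by
  simp [seriesTerm, Nat.descFactorial_eq_zero_iff_lt.mpr h]

theorem seriesTerm_eq {m k : ℕ} (h : m ≤ 2 * k) (t : ℝ) :
    seriesTerm m k t = (-1) ^ (k + 1) * t ^ (2 * k - m) /
      ((2 * k - m)! * (2 * k + 1) * (2 * k + 2) * (2 * k + 3)) := by
  have hfac : ((2 * k + 3)! : ℝ) =
      (2 * k).descFactorial m * ((2 * k - m)! * (2 * k + 1) * (2 * k + 2) * (2 * k + 3)) := by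
    rw [← mul_assoc, ← mul_assoc, ← mul_assoc, mul_comm ((2 * k).descFactorial m : ℝ),
      ← Nat.cast_mul, Nat.factorial_mul_descFactorial h]
    push_cast [Nat.factorial_succ]
    ring
  have hdesc : ((2 * k).descFactorial m : ℝ) ≠ 0 := by
    exact_mod_cast (Nat.descFactorial_pos.mpr h).ne'
  rw [seriesTerm, hfac]
  field_simp

theorem abs_seriesTerm_le (m k : ℕ) {t R : ℝ} (ht : |t| ≤ R) :
    |seriesTerm m k t| ≤ R ^ (2 * k - m) / (2 * k - m)! := by
  rcases lt_or_ge (2 * k) m with h | h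
  · rw [seriesTerm_eq_zero h, abs_zero]
    exact div_nonneg (pow_nonneg ((abs_nonneg t).trans ht) _) (by positivity)
  have hk : (0 : ℝ) ≤ k := k.cast_nonneg
  have hden : ((2 * k - m)! : ℝ) ≤ (2 * k - m)! * (2 * k + 1) * (2 * k + 2) * (2 * k + 3) := by
    rw [mul_assoc, mul_assoc]
    exact le_mul_of_one_le_right (by positivity)
      (by nlinarith [mul_nonneg hk hk, mul_nonneg (mul_nonneg hk hk) hk])
  rw [seriesTerm_eq h, abs_div, abs_mul, abs_pow, abs_pow, abs_neg, abs_one, one_pow, one_mul,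
    abs_of_pos (by positivity : (0 : ℝ) < (2 * k - m)! * (2 * k + 1) * (2 * k + 2) * (2 * k + 3))]
  have hR : 0 ≤ R := (abs_nonneg t).trans ht
  gcongr

theorem summable_seriesTerm (m : ℕ) (t : ℝ) : Summable fun k => seriesTerm m k t :=
  .of_norm_bounded (summable_pow_sub_div_factorial m (abs_nonneg t))
    fun k => abs_seriesTerm_le m k le_rfl

theorem hasDerivAt_seriesTerm (m k : ℕ) (t : ℝ) :
    HasDerivAt (seriesTerm m k) (seriesTerm (m + 1) k t) t := by
  refine (((hasDerivAt_pow (2 * k - m) t).const_mul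
    ((-1) ^ (k + 1) * ((2 * k).descFactorial m : ℝ))).div_const ((2 * k + 3)! : ℝ)).congr_deriv
    ?_
  rw [seriesTerm, Nat.descFactorial_succ, show 2 * k - (m + 1) = 2 * k - m - 1 by omega]
  push_cast
  ring

theorem hasDerivAt_tsum_seriesTerm (m : ℕ) (t : ℝ) :
    HasDerivAt (fun x => ∑' k, seriesTerm m k x) (∑' k, seriesTerm (m + 1) k t) t := by
  have ht : t ∈ Metric.ball (0 : ℝ) (|t| + 1) := by simp
  exact hasDerivAt_tsum_of_isPreconnected
    (summable_pow_sub_div_factorial (m + 1) (by positivity : (0 : ℝ) ≤ |t| + 1))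
    Metric.isOpen_ball (convex_ball _ _).isPreconnected
    (fun k y _ => hasDerivAt_seriesTerm m k y)
    (fun k y hy => abs_seriesTerm_le (m + 1) k (by simpa using (mem_ball_zero_iff.mp hy).le))
    ht (summable_seriesTerm m t) ht

theorem hasSum_seriesTerm_zero (t : ℝ) : HasSum (fun k => seriesTerm 0 k t) (Ffun t) := by
  rcases eq_or_ne t 0 with rfl | ht
  · convert hasSum_single (f := fun k => seriesTerm 0 k 0) 0 fun k hk => by simp [seriesTerm, hk]
    norm_num [Ffun, seriesTerm, Nat.factorial]
  have hsin : HasSum (fun k : ℕ => (-1) ^ (k + 1) * t ^ (2 * (k + 1) + 1) / (2 * (k + 1) + 1)!)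
      (sin t - t) := by
    simpa using (hasSum_nat_add_iff' 1).mpr (Real.hasSum_sin t)
  have hterm : (fun k => seriesTerm 0 k t) =
      fun k => (-1) ^ (k + 1) * t ^ (2 * (k + 1) + 1) / (2 * (k + 1) + 1)! / t ^ 3 := by
    funext k
    rw [seriesTerm, Nat.descFactorial_zero, Nat.sub_zero, show 2 * (k + 1) + 1 = 2 * k + 3 by ring]
    field_simp
    ring
  have hF : Ffun t = (sin t - t) / t ^ 3 := by
    rw [Ffun, if_neg ht]
    field_simp
  rw [hterm, hF]
  exact hsin.div_const _

theorem iteratedDeriv_eq_tsum_seriesTerm (m : ℕ) :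
    iteratedDeriv m Ffun = fun t => ∑' k, seriesTerm m k t := by
  induction m with
  | zero => exact funext fun t => (hasSum_seriesTerm_zero t).tsum_eq.symm
  | succ m ih =>
    funext t
    rw [iteratedDeriv_succ, ih, (hasDerivAt_tsum_seriesTerm m t).deriv]

theorem abs_tsum_sub_sum_seriesTerm_le {m n : ℕ} (hmn : m ≤ 2 * n) {t : ℝ} (ht : 0 ≤ t) :
    |∑' k, seriesTerm m k t - ∑ k ∈ range n, seriesTerm m k t| ≤
      exp t * t ^ (2 * n - m) / (2 * n - m)! := by
  set M := 2 * n - m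
  rw [← (summable_seriesTerm m t).sum_add_tsum_nat_add n, add_sub_cancel_left]
  have hbound (i : ℕ) : |seriesTerm m (i + n) t| ≤ t ^ M / M ! * (t ^ (2 * i) / (2 * i)!) := by
    have h := abs_seriesTerm_le m (i + n) (abs_of_nonneg ht).le
    rw [show 2 * (i + n) - m = M + 2 * i by omega] at h
    exact h.trans (pow_add_div_factorial_le ht M (2 * i))
  calc |∑' i, seriesTerm m (i + n) t| ≤ t ^ M / M ! * cosh t :=
        tsum_of_norm_bounded (f := fun i => seriesTerm m (i + n) t)
          ((Real.hasSum_cosh t).mul_left _) hbound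
    _ ≤ t ^ M / M ! * exp t := by gcongr; exact Real.cosh_le_exp ht
    _ = exp t * t ^ M / M ! := by ring

theorem sum_Icc_eq_sum_range_seriesTerm (m N : ℕ) (t : ℝ) :
    ∑ k ∈ Icc ((m + 1) / 2) N, (-1 : ℝ) ^ (k + 1) * t ^ (2 * k - m) /
        ((2 * k - m)! * (2 * k + 1) * (2 * k + 2) * (2 * k + 3)) =
      ∑ k ∈ range (N + 1), seriesTerm m k t := by
  have hsub : Icc ((m + 1) / 2) N ⊆ range (N + 1) := fun k hk => by
    simp only [mem_Icc, mem_range] at hk ⊢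
    omega
  rw [← sum_subset hsub fun k hk hk' => seriesTerm_eq_zero (by simp at hk hk'; omega) t]
  exact sum_congr rfl fun k hk => (seriesTerm_eq (by simp at hk; omega) t).symm

end Ffun

end

open Ffun in
/-- Remainder bound for the Taylor-series computation of the `m`-th derivative of
`F(t) = ((sin t)/t - 1)/t²`: for `2N ≥ m` and `t ≥ 0`,
`|(1/m!) F⁽ᵐ⁾(t) - S_F(t;N,m)| ≤ (1/m!) eᵗ t^{2N+2-m}/(2N+2-m)!`. -/
theorem Ffun_deriv_partial_sum_bound (m N : ℕ) (hmN : m ≤ 2 * N) (t : ℝ) (ht : 0 ≤ t) :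
    |(1 / (m.factorial : ℝ)) * iteratedDeriv m Ffun t -
        (1 / (m.factorial : ℝ)) * ∑ k ∈ Finset.Icc ((m + 1) / 2) N,
          (-1 : ℝ) ^ (k + 1) * t ^ (2 * k - m) /
            (((2 * k - m).factorial : ℝ) * (2 * k + 1) * (2 * k + 2) * (2 * k + 3))| ≤
      (1 / (m.factorial : ℝ)) * Real.exp t * t ^ (2 * N + 2 - m) /
        ((2 * N + 2 - m).factorial : ℝ) := by
  have htail := abs_tsum_sub_sum_seriesTerm_le (by omega : m ≤ 2 * (N + 1)) ht
  rw [show 2 * (N + 1) - m = 2 * N + 2 - m by omega] at htail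
  rw [iteratedDeriv_eq_tsum_seriesTerm, sum_Icc_eq_sum_range_seriesTerm, ← mul_sub, abs_mul,
    abs_of_nonneg (by positivity)]
  calc _ ≤ 1 / (m.factorial : ℝ) *
        (exp t * t ^ (2 * N + 2 - m) / (2 * N + 2 - m).factorial) := by gcongr
    _ = _ := by ring
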